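/- Let (W,S) be a finite crystallographic Coxeter system and (W',S') a parabolic subsystem with root subsystem Δ'. Then the extended Bruhat graph Γ(W',S') is a subgraph of Γ(W,S) under the inclusion W' → W; moreover, if for v,w ∈ W' there is a quantum arrow v →_e w in Γ(W,S), i.e. w = v s_γ for some positive root γ of Δ with l(w) = l(v) − 2(ρ,γ∨) + 1, then γ lies in Δ' and this arrow already belongs to Γ(W',S'). -/

import Mathlib

open scoped BigOperators Classical

noncomputable section

/-- The simple root `α_s` realized as a basis vector of `B → ℝ`. -/
def alr {B : Type} [DecidableEq B] (s : B) : B → ℝ := Pi.single s 1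

/-- A geometric realization of a finite Coxeter system `(W,S)`:  the vector space `V`
is `B → ℝ`, with the simple root `α_s` realized as the basis vector `alr s`;
the symmetric bilinear form satisfies `(α_s, α_t) = -cos (π / m(s,t)) √((α_s,α_s)(α_t,α_t))`
(so that each simple root may be rescaled, e.g. by a crystallographic normalization);
`σ` is the geometric representation and `refl` assigns to every root `γ = w(α_s)` the
reflection `s_γ = w s w⁻¹`. -/
structure GeomCoxeterSystem (B : Type) [Fintype B] [DecidableEq B]
    (W : Type) [Group W] where
  M : CoxeterMatrix B
  cs : CoxeterSystem M W
  finW : Finite W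
  bil : (B → ℝ) →ₗ[ℝ] (B → ℝ) →ₗ[ℝ] ℝ
  bil_symm : ∀ u v, bil u v = bil v u
  bil_diag_pos : ∀ s : B, 0 < bil (alr s) (alr s)
  bil_offdiag : ∀ s t : B, s ≠ t →
    bil (alr s) (alr t) =
      -Real.cos (Real.pi / (M s t)) *
        Real.sqrt (bil (alr s) (alr s) * bil (alr t) (alr t))
  σ : W →* ((B → ℝ) ≃ₗ[ℝ] (B → ℝ))
  σ_simple : ∀ (s : B) (v : B → ℝ),
    σ (cs.simple s) v =
      v - (2 * bil (alr s) v / bil (alr s) (alr s)) • alr s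
  refl : (B → ℝ) → W
  refl_spec : ∀ (w : W) (s : B), refl (σ w (alr s)) = w * cs.simple s * w⁻¹

namespace GeomCoxeterSystem

variable {B : Type} [Fintype B] [DecidableEq B] {W : Type} [Group W]
variable (g : GeomCoxeterSystem B W)


/-- The root system `Δ` of `(W,S)`. -/
def roots : Set (B → ℝ) := Set.range fun p : W × B => g.σ p.1 (alr p.2)

/-- The positive roots `Δ₊`. -/
def posRoots : Set (B → ℝ) := {v ∈ g.roots | ∀ s, 0 ≤ v s}

/-- `(W,S)` is crystallographic: the (normalized) root system satisfies
`2(γ,γ')/(γ,γ) ∈ ℤ` for all roots `γ, γ'`. -/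
def IsCrystallographic : Prop :=
  ∀ γ ∈ g.roots, ∀ γ' ∈ g.roots, ∃ k : ℤ, 2 * g.bil γ γ' / g.bil γ γ = (k : ℝ)

/-- The generator `[γ]` of the free algebra when `γ` is a root (and `0` otherwise). -/
def brkF (v : B → ℝ) : FreeAlgebra ℝ g.roots :=
  if h : v ∈ g.roots then FreeAlgebra.ι ℝ (⟨v, h⟩ : g.roots) else 0

/-- `γ : ℤ → V` lists (cyclically, with `γ_{j+m} = -γ_j`) the positive roots
`γ_0, …, γ_{m-1}` of a rank-two root subsystem of type `I₂(m)`, ordered so that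
`ℝ_{≥0}⟨γ_i, γ_{i+1}⟩ ∩ Δ₊ = {γ_i, γ_{i+1}}`. -/
structure IsChain (m : ℕ) (γ : ℤ → (B → ℝ)) : Prop where
  two_le : 2 ≤ m
  anti : ∀ j : ℤ, γ (j + m) = -γ j
  mem_pos : ∀ i : ℤ, 0 ≤ i → i < m → γ i ∈ g.posRoots
  inj : ∀ i j : ℤ, 0 ≤ i → i < m → 0 ≤ j → j < m → γ i = γ j → i = j
  indep : LinearIndependent ℝ ![γ 0, γ 1]
  cone : ∀ i : ℤ, 0 ≤ i → i ≤ (m : ℤ) - 2 →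
    {v | v ∈ g.posRoots ∧ ∃ a b : ℝ, 0 ≤ a ∧ 0 ≤ b ∧ v = a • γ i + b • γ (i + 1)} =
      {γ i, γ (i + 1)}
  closed : ∀ v ∈ g.roots, v ∈ Submodule.span ℝ {γ 0, γ 1} → ∃ j : ℤ, v = γ j

/-- The ordered product `[γ_0][γ_1]⋯[γ_{l-1}]` in the free algebra. -/
def chainProd (γ : ℤ → (B → ℝ)) (l : ℕ) : FreeAlgebra ℝ g.roots :=
  ((List.range l).map fun i => g.brkF (γ i)).prod

/-- The reversed product `[γ_{l-1}]⋯[γ_1][γ_0]` in the free algebra. -/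
def chainProdRev (γ : ℤ → (B → ℝ)) (l : ℕ) : FreeAlgebra ℝ g.roots :=
  (((List.range l).reverse).map fun i => g.brkF (γ i)).prod

/-- The defining relations (i)–(iv) of the bracket algebra `BE(W,S)`. -/
inductive BRel : FreeAlgebra ℝ g.roots → FreeAlgebra ℝ g.roots → Prop
  | neg (γ : B → ℝ) (h : γ ∈ g.roots) : BRel (g.brkF (-γ)) (-(g.brkF γ))
  | sq (γ : B → ℝ) (h : γ ∈ g.roots) : BRel (g.brkF γ * g.brkF γ) 0
  | quad (m : ℕ) (γ : ℤ → (B → ℝ)) (hc : g.IsChain m γ) (k : ℕ) (hk1 : 1 ≤ k)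
      (hk2 : 2 * k ≤ m) :
      BRel (∑ i ∈ Finset.range (m + 1), g.brkF (γ i) * g.brkF (γ (i + k))) 0
  | fourTerm (m : ℕ) (γ : ℤ → (B → ℝ)) (hc : g.IsChain m γ) (hm : 4 ≤ m) :
      BRel (g.brkF (γ (m / 2 - 1)) * g.chainProd γ (2 * (m / 2 - 1) + 1)
          + g.chainProd γ (2 * (m / 2 - 1) + 1) * g.brkF (γ (m / 2 - 1))
          + g.brkF (γ (m / 2 - 1)) * g.chainProdRev γ (2 * (m / 2 - 1) + 1)
          + g.chainProdRev γ (2 * (m / 2 - 1) + 1) * g.brkF (γ (m / 2 - 1))) 0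

/-- The bracket algebra `BE(W,S)`. -/
def BE : Type := RingQuot g.BRel

instance : Ring g.BE := inferInstanceAs (Ring (RingQuot g.BRel))
instance : Algebra ℝ g.BE := inferInstanceAs (Algebra ℝ (RingQuot g.BRel))

/-- The element `[γ]` of the bracket algebra `BE(W,S)`. -/
def brk (v : B → ℝ) : g.BE := RingQuot.mkAlgHom ℝ g.BRel (g.brkF v)

/-- Only the relations (i)–(iii): the quotient used to check that commutativity of
Dunkl elements only uses the quadratic relations. -/
inductive BRel3 : FreeAlgebra ℝ g.roots → FreeAlgebra ℝ g.roots → Prop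
  | neg (γ : B → ℝ) (h : γ ∈ g.roots) : BRel3 (g.brkF (-γ)) (-(g.brkF γ))
  | sq (γ : B → ℝ) (h : γ ∈ g.roots) : BRel3 (g.brkF γ * g.brkF γ) 0
  | quad (m : ℕ) (γ : ℤ → (B → ℝ)) (hc : g.IsChain m γ) (k : ℕ) (hk1 : 1 ≤ k)
      (hk2 : 2 * k ≤ m) :
      BRel3 (∑ i ∈ Finset.range (m + 1), g.brkF (γ i) * g.brkF (γ (i + k))) 0

/-- The algebra defined by the relations (i)–(iii) only. -/
def BE3 : Type := RingQuot g.BRel3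

instance : Ring g.BE3 := inferInstanceAs (Ring (RingQuot g.BRel3))
instance : Algebra ℝ g.BE3 := inferInstanceAs (Algebra ℝ (RingQuot g.BRel3))

def brk3 (v : B → ℝ) : g.BE3 := RingQuot.mkAlgHom ℝ g.BRel3 (g.brkF v)

/-- `⟨ω_s, γ∨⟩`, the pairing of the fundamental weight `ω_s` with the coroot
`γ∨ = 2γ/(γ,γ)`; in the coordinates of the basis of simple roots this equals
`γ_s (α_s, α_s) / (γ, γ)`. -/
def chevCoeff (s : B) (γ : B → ℝ) : ℝ :=
  γ s * g.bil (alr s) (alr s) / g.bil γ γ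

/-- The Chevalley element `η_s = Σ_{γ ∈ Δ₊} ⟨ω_s, γ∨⟩ [γ]` of `BE(W,S)`. -/
def eta (s : B) : g.BE := ∑ᶠ γ ∈ g.posRoots, g.chevCoeff s γ • g.brk γ

/-- The Dunkl element `θ_s = Σ_{s'} (α_s, α_{s'}) η_{s'}` of `BE(W,S)`. -/
def dunkl (s : B) : g.BE := ∑ s' : B, g.bil (alr s) (alr s') • g.eta s'

def eta3 (s : B) : g.BE3 := ∑ᶠ γ ∈ g.posRoots, g.chevCoeff s γ • g.brk3 γ

def dunkl3 (s : B) : g.BE3 := ∑ s' : B, g.bil (alr s) (alr s') • g.eta3 s'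

/-! ### Quantization -/

/-- The coefficient ring `ℝ[q_s : s ∈ S]`. -/
abbrev QR (B : Type) : Type := MvPolynomial B ℝ

/-- `q_γ = q_s` for a simple root `γ = α_s` (junk value `1` otherwise). -/
def qOf (v : B → ℝ) : QR B :=
  if h : ∃ s : B, v = alr s then MvPolynomial.X h.choose else 1

/-- The half-sum `ρ` of the positive roots. -/
def rho : B → ℝ := (2⁻¹ : ℝ) • ∑ᶠ γ ∈ g.posRoots, γ

/-- `(ρ, γ∨) = 2(ρ,γ)/(γ,γ)`. -/
def pairRho (γ : B → ℝ) : ℝ := 2 * g.bil g.rho γ / g.bil γ γ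

/-- The generator `[γ]` in the free algebra over `ℝ[q_s]`. -/
def qbrkF (v : B → ℝ) : FreeAlgebra (QR B) g.roots :=
  if h : v ∈ g.roots then FreeAlgebra.ι (QR B) (⟨v, h⟩ : g.roots) else 0

def qchainProd (γ : ℤ → (B → ℝ)) (l : ℕ) : FreeAlgebra (QR B) g.roots :=
  ((List.range l).map fun i => g.qbrkF (γ i)).prod

def qchainProdRev (γ : ℤ → (B → ℝ)) (l : ℕ) : FreeAlgebra (QR B) g.roots :=
  (((List.range l).reverse).map fun i => g.qbrkF (γ i)).prod

/-- The defining relations (i)'–(iv)' of the quantized bracket algebra `qBE(W,S)`. -/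
inductive QRel : FreeAlgebra (QR B) g.roots → FreeAlgebra (QR B) g.roots → Prop
  | neg (γ : B → ℝ) (h : γ ∈ g.roots) : QRel (g.qbrkF (-γ)) (-(g.qbrkF γ))
  | sqSimple (s : B) :
      QRel (g.qbrkF (alr s) * g.qbrkF (alr s)) (algebraMap (QR B) _ (MvPolynomial.X s))
  | sqPos (γ : B → ℝ) (h : γ ∈ g.posRoots) (hs : ∀ s : B, γ ≠ alr s) :
      QRel (g.qbrkF γ * g.qbrkF γ) 0
  | quad (m : ℕ) (γ : ℤ → (B → ℝ)) (hc : g.IsChain m γ) (k : ℕ) (hk1 : 1 ≤ k)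
      (hk2 : 2 * k ≤ m) :
      QRel (∑ i ∈ Finset.range (m + 1), g.qbrkF (γ i) * g.qbrkF (γ (i + k))) 0
  | fourTerm (m : ℕ) (γ : ℤ → (B → ℝ)) (hc : g.IsChain m γ) (hm : 4 ≤ m)
      (hl : (g.cs.length (g.refl (γ (m / 2 - 1))) : ℝ) ≠ 2 * g.pairRho (γ (m / 2 - 1)) - 1) :
      QRel (g.qbrkF (γ (m / 2 - 1)) * g.qchainProd γ (2 * (m / 2 - 1) + 1)
          + g.qchainProd γ (2 * (m / 2 - 1) + 1) * g.qbrkF (γ (m / 2 - 1))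
          + g.qbrkF (γ (m / 2 - 1)) * g.qchainProdRev γ (2 * (m / 2 - 1) + 1)
          + g.qchainProdRev γ (2 * (m / 2 - 1) + 1) * g.qbrkF (γ (m / 2 - 1))) 0

/-- The quantized bracket algebra `qBE(W,S)`. -/
def qBE : Type := RingQuot g.QRel

instance : Ring g.qBE := inferInstanceAs (Ring (RingQuot g.QRel))
instance : Algebra (QR B) g.qBE := inferInstanceAs (Algebra (QR B) (RingQuot g.QRel))

/-- The element `[γ]` of `qBE(W,S)`. -/
def qbrk (v : B → ℝ) : g.qBE := RingQuot.mkAlgHom (QR B) g.QRel (g.qbrkF v)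

/-- The quantum Chevalley element `η̃_s`. -/
def qeta (s : B) : g.qBE :=
  ∑ᶠ γ ∈ g.posRoots, (MvPolynomial.C (g.chevCoeff s γ) : QR B) • g.qbrk γ

/-- The quantum Dunkl element `θ̃_s`. -/
def qdunkl (s : B) : g.qBE :=
  ∑ s' : B, (MvPolynomial.C (g.bil (alr s) (alr s')) : QR B) • g.qeta s'

/-! ### Operators: divided differences and (quantum) Bruhat operators -/

/-- The action of `w ∈ W` on polynomial functions on `V`: `(w·f)(v) = f(σ(w⁻¹)v)`. -/
def polyAct (w : W) : MvPolynomial B ℝ →ₐ[ℝ] MvPolynomial B ℝ :=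
  MvPolynomial.aeval fun s => ∑ s' : B, MvPolynomial.C ((g.σ w⁻¹ (alr s')) s) * MvPolynomial.X s'

/-- The linear polynomial `v ↦ (γ, v)`, i.e. `γ` regarded as an element of `S(V*)`
via the bilinear form. -/
def linPoly (γ : B → ℝ) : MvPolynomial B ℝ :=
  ∑ s : B, MvPolynomial.C (g.bil γ (alr s)) * MvPolynomial.X s

/-- The divided difference (Demazure) operator `∂_γ = (1 - s_γ)/γ` on `S(V*)`. -/
def divDiff (γ : B → ℝ) (f : MvPolynomial B ℝ) : MvPolynomial B ℝ :=
  if h : ∃ q, f - g.polyAct (g.refl γ) f = g.linPoly γ * q then h.choose else 0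

/-- The Bruhat operator `s_γ` on the group ring `ℝ⟨W⟩`: `w ↦ w s_γ` if
`l(w s_γ) = l(w) + 1` and `w ↦ 0` otherwise. -/
def bruhatOp (γ : B → ℝ) : MonoidAlgebra ℝ W →ₗ[ℝ] MonoidAlgebra ℝ W :=
  (MonoidAlgebra.coeffLinearEquiv ℝ).symm.toLinearMap ∘ₗ (Finsupp.lsum ℝ fun w =>
    if g.cs.length (w * g.refl γ) = g.cs.length w + 1
    then Finsupp.lsingle (w * g.refl γ) else 0) ∘ₗ (MonoidAlgebra.coeffLinearEquiv ℝ).toLinearMap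

/-- `q_{γ∨} = Π_s q_s^{n_s}` where `γ∨ = Σ_s n_s α_s∨`. -/
def qCoroot (γ : B → ℝ) : QR B :=
  ∏ s : B, MvPolynomial.X s ^ ⌊g.chevCoeff s γ⌋₊

/-- The quantum Bruhat operator `s̃_γ` on the group ring `ℝ[q_s]⟨W⟩`. -/
def qBruhatOp (γ : B → ℝ) : MonoidAlgebra (QR B) W →ₗ[QR B] MonoidAlgebra (QR B) W :=
  (MonoidAlgebra.coeffLinearEquiv (QR B)).symm.toLinearMap ∘ₗ (Finsupp.lsum (QR B) fun w =>
    if g.cs.length (w * g.refl γ) = g.cs.length w + 1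
    then Finsupp.lsingle (w * g.refl γ)
    else if (g.cs.length w : ℝ) = g.cs.length (w * g.refl γ) + 2 * g.pairRho γ - 1
    then g.qCoroot γ • Finsupp.lsingle (w * g.refl γ)
    else 0) ∘ₗ (MonoidAlgebra.coeffLinearEquiv (QR B)).toLinearMap

/-- The ideal `I_W ⊂ S(V*)` generated by the `W`-invariant polynomials without
constant term. -/
def invIdeal : Ideal (MvPolynomial B ℝ) :=
  Ideal.span {f | (∀ w : W, g.polyAct w f = f) ∧ MvPolynomial.constantCoeff f = 0}

/-! ### Bruhat graph arrows -/

/-- An arrow `v → w` of the (extended) Bruhat graph:  `w = v s_γ` with `γ > 0` and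
`l(w) = l(v) + 1`. -/
def coverArrow (v w : W) : Prop :=
  ∃ γ ∈ g.posRoots, w = v * g.refl γ ∧ g.cs.length w = g.cs.length v + 1

/-- A quantum arrow `v →_e w` (labelled by the positive root `γ`) of the extended
Bruhat graph: `w = v s_γ` and `l(w) = l(v) - 2(ρ,γ∨) + 1`. -/
def qArrow (γ : B → ℝ) (v w : W) : Prop :=
  γ ∈ g.posRoots ∧ w = v * g.refl γ ∧
    (g.cs.length w : ℝ) = (g.cs.length v : ℝ) - 2 * g.pairRho γ + 1

/-! ### Bernstein–Gelfand–Gelfand polynomials and substitution operators -/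

/-- The longest element `w₀` of `W`. -/
def w0 : W :=
  haveI := g.finW
  (Finite.exists_max g.cs.length).choose

/-- A choice of reduced word for `w`. -/
def chooseWord (w : W) : List B := (g.cs.exists_reduced_word w).choose

/-- `X_{w₀} = |W|⁻¹ Π_{γ ∈ Δ₊} γ`. -/
def XwTop : MvPolynomial B ℝ :=
  MvPolynomial.C ((Nat.card W : ℝ)⁻¹) * ∏ᶠ γ ∈ g.posRoots, g.linPoly γ

/-- The composition of divided difference operators along a word. -/
def applyWord (l : List B) (f : MvPolynomial B ℝ) : MvPolynomial B ℝ :=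
  l.foldr (fun s q => g.divDiff (alr s) q) f

/-- The Bernstein–Gelfand–Gelfand polynomial `X_w = ∂_{w⁻¹w₀} X_{w₀}`. -/
def Xw (w : W) : MvPolynomial B ℝ := g.applyWord (g.chooseWord (w⁻¹ * g.w0)) g.XwTop

/-- `X_w` regarded as a polynomial with coefficients in `ℝ[q_s]`. -/
def XwR (w : W) : MvPolynomial B (QR B) :=
  MvPolynomial.map (algebraMap ℝ (QR B)) (g.Xw w)

/-- The operator on `ℝ[q_s]⟨W⟩` corresponding to the quantum Chevalley element `η̃_s`
via the quantum Bruhat representation. -/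
def opEta (s : B) : Module.End (QR B) (MonoidAlgebra (QR B) W) :=
  ∑ᶠ γ ∈ g.posRoots, (MvPolynomial.C (g.chevCoeff s γ) : QR B) • g.qBruhatOp γ

/-- The operator corresponding to the coordinate function `X_s = (2/(α_s,α_s)) ω_s`
under the substitution `ω_s ↦ η̃_s`. -/
def opX (s : B) : Module.End (QR B) (MonoidAlgebra (QR B) W) :=
  (MvPolynomial.C (2 / g.bil (alr s) (alr s)) : QR B) • g.opEta s

/-- The ordered product `Π_s F(s)^(m s)` (ascending order of `B`). -/
def monProd [LinearOrder B] (F : B → Module.End (QR B) (MonoidAlgebra (QR B) W))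
    (m : B →₀ ℕ) : Module.End (QR B) (MonoidAlgebra (QR B) W) :=
  ((Finset.univ.sort (α := B) (· ≤ ·)).map fun s => F s ^ m s).prod

/-- The operator `[f]` on `ℝ[q_s]⟨W⟩` obtained from `f ∈ S(V*) ⊗ ℝ[q_s]` by the
substitution `ω_s ↦ η̃_s` (and the quantum Bruhat representation); since the
operators `η̃_s` pairwise commute, the ordered products below realize exactly the
substitution of the commuting elements `η̃_s` into `f`. -/
def substOp [LinearOrder B] (f : MvPolynomial B (QR B)) :
    Module.End (QR B) (MonoidAlgebra (QR B) W) :=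
  ∑ m ∈ f.support, f.coeff m • monProd g.opX m

/-! ### The twisted group algebra `BE(W,S){W}` -/

/-- Generators `[γ]` inside the free algebra on `Δ ⊕ W`. -/
def tbrkF (v : B → ℝ) : FreeAlgebra ℝ (g.roots ⊕ W) :=
  if h : v ∈ g.roots then FreeAlgebra.ι ℝ (Sum.inl (⟨v, h⟩ : g.roots)) else 0

/-- Group-like generators `w ∈ W` inside the free algebra on `Δ ⊕ W`. -/
def tgrpF (w : W) : FreeAlgebra ℝ (g.roots ⊕ W) := FreeAlgebra.ι ℝ (Sum.inr w)

def tchainProd (γ : ℤ → (B → ℝ)) (l : ℕ) : FreeAlgebra ℝ (g.roots ⊕ W) :=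
  ((List.range l).map fun i => g.tbrkF (γ i)).prod

def tchainProdRev (γ : ℤ → (B → ℝ)) (l : ℕ) : FreeAlgebra ℝ (g.roots ⊕ W) :=
  (((List.range l).reverse).map fun i => g.tbrkF (γ i)).prod

/-- The defining relations of the twisted group algebra `BE(W,S){W}`:  the relations
of `BE(W,S)`, the group relations of `W`, and the commutation rule
`w [γ] = [w(γ)] w`. -/
inductive TRel : FreeAlgebra ℝ (g.roots ⊕ W) → FreeAlgebra ℝ (g.roots ⊕ W) → Prop
  | neg (γ : B → ℝ) (h : γ ∈ g.roots) : TRel (g.tbrkF (-γ)) (-(g.tbrkF γ))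
  | sq (γ : B → ℝ) (h : γ ∈ g.roots) : TRel (g.tbrkF γ * g.tbrkF γ) 0
  | quad (m : ℕ) (γ : ℤ → (B → ℝ)) (hc : g.IsChain m γ) (k : ℕ) (hk1 : 1 ≤ k)
      (hk2 : 2 * k ≤ m) :
      TRel (∑ i ∈ Finset.range (m + 1), g.tbrkF (γ i) * g.tbrkF (γ (i + k))) 0
  | fourTerm (m : ℕ) (γ : ℤ → (B → ℝ)) (hc : g.IsChain m γ) (hm : 4 ≤ m) :
      TRel (g.tbrkF (γ (m / 2 - 1)) * g.tchainProd γ (2 * (m / 2 - 1) + 1)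
          + g.tchainProd γ (2 * (m / 2 - 1) + 1) * g.tbrkF (γ (m / 2 - 1))
          + g.tbrkF (γ (m / 2 - 1)) * g.tchainProdRev γ (2 * (m / 2 - 1) + 1)
          + g.tchainProdRev γ (2 * (m / 2 - 1) + 1) * g.tbrkF (γ (m / 2 - 1))) 0
  | grpMul (w v : W) : TRel (g.tgrpF w * g.tgrpF v) (g.tgrpF (w * v))
  | grpOne : TRel (g.tgrpF 1) 1
  | comm (w : W) (γ : B → ℝ) (h : γ ∈ g.roots) :
      TRel (g.tgrpF w * g.tbrkF γ) (g.tbrkF (g.σ w γ) * g.tgrpF w)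

/-- The twisted group algebra `BE(W,S){W}`. -/
def TwBE : Type := RingQuot g.TRel

instance : Ring g.TwBE := inferInstanceAs (Ring (RingQuot g.TRel))
instance : Algebra ℝ g.TwBE := inferInstanceAs (Algebra ℝ (RingQuot g.TRel))

/-- The element `[γ]` of `BE(W,S){W}`. -/
def tbrk (v : B → ℝ) : g.TwBE := RingQuot.mkAlgHom ℝ g.TRel (g.tbrkF v)

/-- The element `w` of `BE(W,S){W}`. -/
def tgrp (w : W) : g.TwBE := RingQuot.mkAlgHom ℝ g.TRel (g.tgrpF w)

end GeomCoxeterSystem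

open GeomCoxeterSystem

/-!
Everything is transported along the parabolic embedding `f : W' → W` by the criterion
`ℓ(w s_i) > ℓ(w) ↔ w(α_i) > 0`, which reduces to the rank-two subgroups `⟨s_i, s_j⟩`.
It shows that `f` preserves lengths. In the crystallographic case the only positive root
proportional to `α_i` is `α_i` itself, so `s_i` permutes `Δ₊ \ {α_i}`; hence `(ρ, α_i∨) = 1`,
which makes `(ρ, γ∨)` the same whether computed in `W'` or in `W`, and the inversion set of
`f w` is the image of that of `w`. Arrows of `Γ(W')` are therefore arrows of `Γ(W)`.
Conversely, the label `γ` of a quantum arrow `f v → f w` is an inversion of `s_γ = f (v⁻¹ w)`,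
hence the image of a root of `W'`.
-/

lemma alr_apply_of_ne {B : Type} [DecidableEq B] {i b : B} (h : b ≠ i) : alr i b = 0 :=
  Pi.single_eq_of_ne h 1

@[simp] lemma alr_apply_self {B : Type} [DecidableEq B] (i : B) : alr i i = 1 :=
  Pi.single_eq_same i 1

def sinRatio (θ : ℝ) (k : ℕ) : ℝ := Real.sin (k * θ) / Real.sin θ

lemma sinRatio_add_two (θ : ℝ) (k : ℕ) :
    sinRatio θ (k + 2) = 2 * Real.cos θ * sinRatio θ (k + 1) - sinRatio θ k := by
  have h₁ : ((k + 2 : ℕ) : ℝ) * θ = (k + 1 : ℕ) * θ + θ := by push_cast; ring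
  have h₀ : (k : ℝ) * θ = (k + 1 : ℕ) * θ - θ := by push_cast; ring
  rw [sinRatio, sinRatio, sinRatio, h₁, h₀, Real.sin_add, Real.sin_sub]
  ring

lemma sinRatio_nonneg {θ : ℝ} {k : ℕ} (hθ : 0 ≤ θ) (hk : k * θ ≤ Real.pi) :
    0 ≤ sinRatio θ k := by
  rcases k.eq_zero_or_pos with rfl | hk0
  · simp [sinRatio]
  have : θ ≤ k * θ := le_mul_of_one_le_left hθ (by exact_mod_cast hk0)
  exact div_nonneg (Real.sin_nonneg_of_nonneg_of_le_pi (by positivity) hk)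
    (Real.sin_nonneg_of_nonneg_of_le_pi hθ (this.trans hk))

lemma Real.eq_three_of_odd_of_intCast_eq_four_mul_cos_sq {m : ℕ} (hm : Odd m) (hm3 : 3 ≤ m)
    {k : ℤ} (hk : (k : ℝ) = 4 * Real.cos (Real.pi / m) ^ 2) : m = 3 := by
  obtain rfl | rfl | hm7 : m = 3 ∨ m = 5 ∨ 7 ≤ m := by obtain ⟨j, rfl⟩ := hm; omega
  · rfl
  · have h5 : √5 * √5 = 5 := Real.mul_self_sqrt (by norm_num)
    rw [Nat.cast_ofNat, Real.cos_pi_div_five] at hk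
    have hlo : ((2 : ℤ) : ℝ) < k := by rw [hk]; nlinarith [Real.sqrt_nonneg 5]
    have hhi : (k : ℝ) < ((3 : ℤ) : ℝ) := by rw [hk]; nlinarith [Real.sqrt_nonneg 5]
    have := Int.cast_lt.1 hlo
    have := Int.cast_lt.1 hhi
    omega
  · have hm7 : (7 : ℝ) ≤ m := by exact_mod_cast hm7
    have hθ : 0 < Real.pi / m := by positivity
    have hθ6 : Real.pi / m < Real.pi / 6 :=
      div_lt_div_of_pos_left Real.pi_pos (by norm_num) (by linarith)
    have hcos : √3 / 2 < Real.cos (Real.pi / m) := by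
      rw [← Real.cos_pi_div_six]
      exact Real.cos_lt_cos_of_nonneg_of_le_pi hθ.le (by linarith [Real.pi_pos]) hθ6
    have hcos' : Real.cos (Real.pi / m) < 1 := by
      simpa using Real.cos_lt_cos_of_nonneg_of_le_pi le_rfl (by linarith [Real.pi_pos]) hθ
    have h3 : √3 * √3 = 3 := Real.mul_self_sqrt (by norm_num)
    have hlo : ((3 : ℤ) : ℝ) < k := by rw [hk]; nlinarith [Real.sqrt_nonneg 3]
    have hhi : (k : ℝ) < ((4 : ℤ) : ℝ) := by rw [hk]; nlinarith [Real.sqrt_nonneg 3]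
    have := Int.cast_lt.1 hlo
    have := Int.cast_lt.1 hhi
    omega

lemma List.eq_alternatingWord_of_isChain_ne {A : Type*} :
    ∀ {ω : List A} {a b : A}, (∀ x ∈ ω, x = a ∨ x = b) → (ω ++ [b]).IsChain (· ≠ ·) →
      ω = CoxeterSystem.alternatingWord b a ω.length := by
  intro ω
  induction ω using List.reverseRecOn with
  | nil => intros; rfl
  | append_singleton ω x ih =>
    intro a b hmem hch
    rw [List.isChain_append] at hch
    have hxa : x = a := (hmem x (by simp)).resolve_right (by simpa using hch.2.2)
    subst hxa
    have hω := ih (fun y hy => (hmem y (by simp [hy])).symm) hch.1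
    rw [List.length_append, List.length_singleton, CoxeterSystem.alternatingWord_succ, ← hω,
      List.concat_eq_append]

namespace CoxeterSystem

variable {B : Type*} {W : Type*} [Group W] {M : CoxeterMatrix B} (cs : CoxeterSystem M W)

lemma IsReduced.isChain_ne {cs : CoxeterSystem M W} :
    ∀ {ω : List B}, cs.IsReduced ω → ω.IsChain (· ≠ ·)
  | [], _ => .nil
  | [_], _ => .singleton _
  | x :: y :: t, h => by
    refine List.isChain_cons_cons.2 ⟨?_, IsReduced.isChain_ne (by simpa using h.drop 1)⟩
    rintro rfl
    have := cs.length_wordProd_le t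
    rw [IsReduced, wordProd_cons, wordProd_cons, simple_mul_simple_cancel_left,
      List.length_cons, List.length_cons] at h
    omega

lemma IsReduced.eq_alternatingWord {cs : CoxeterSystem M W} {ω : List B} {i t : B}
    (hω : ∀ x ∈ ω, x = i ∨ x = t) (hred : cs.IsReduced (ω ++ [i])) (hM : M i t ≠ 0) :
    ω = alternatingWord i t ω.length ∧ ω.length + 1 ≤ M i t := by
  have hω' := List.eq_alternatingWord_of_isChain_ne (fun x hx => (hω x hx).symm) hred.isChain_ne
  refine ⟨hω', not_lt.1 fun hlt => cs.not_isReduced_alternatingWord t i (m := ω.length + 1)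
    (M.symmetric t i ▸ hM) (M.symmetric t i ▸ hlt) ?_⟩
  rwa [alternatingWord_succ, ← hω', List.concat_eq_append]

lemma exists_dihedral_decomposition (w : W) (i t : B) :
    ∃ (u : W) (ω : List B), (∀ x ∈ ω, x = i ∨ x = t) ∧ w = u * cs.wordProd ω ∧
      cs.length w = cs.length u + ω.length ∧
      cs.length (u * cs.simple i) = cs.length u + 1 ∧
      cs.length (u * cs.simple t) = cs.length u + 1 := by
  obtain ⟨⟨u, ω⟩, ⟨hω, hw, hl⟩, hmin⟩ := (measure fun p : W × List B => cs.length p.1).wf.has_min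
    {p | (∀ x ∈ p.2, x = i ∨ x = t) ∧ w = p.1 * cs.wordProd p.2 ∧
      cs.length w = cs.length p.1 + p.2.length} ⟨(w, []), by simp⟩
  dsimp only at hω hw hl
  have hasc : ∀ x, x = i ∨ x = t → cs.length (u * cs.simple x) = cs.length u + 1 :=
    fun x hx => (cs.length_mul_simple u x).resolve_right fun hux => by
      refine hmin (u * cs.simple x, x :: ω) ⟨?_, ?_, ?_⟩
        (show cs.length (u * cs.simple x) < cs.length u by omega)
      · simpa [hx] using hω
      · rwa [wordProd_cons, ← mul_assoc, simple_mul_simple_cancel_right]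
      · dsimp only; rw [List.length_cons]; omega
  exact ⟨u, ω, hω, hw, hl, hasc i (.inl rfl), hasc t (.inr rfl)⟩

lemma induction_on_right_ascent {p : W → Prop} (one : p 1)
    (mul_simple : ∀ w i, cs.length (w * cs.simple i) = cs.length w + 1 → p w →
      p (w * cs.simple i)) (w : W) : p w := by
  induction hn : cs.length w using Nat.strong_induction_on generalizing w with
  | _ n ih =>
  rcases eq_or_ne w 1 with rfl | hw
  · exact one
  obtain ⟨i, hi⟩ := cs.exists_rightDescent_of_ne_one hw
  have hi := cs.isRightDescent_iff.1 hi
  rw [← cs.simple_mul_simple_cancel_right (w := w) i]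
  exact mul_simple _ _ (by rw [cs.simple_mul_simple_cancel_right]; omega) (ih _ (by omega) _ rfl)

lemma reflTransGen_odd_of_conj {b t : B} {u : W} (h : u * cs.simple t * u⁻¹ = cs.simple b) :
    Relation.ReflTransGen (fun x y => Odd (M x y)) b t := by
  classical
  by_contra hbt
  set O := {a | Relation.ReflTransGen (fun x y => Odd (M x y)) b a}
  -- the character of `W` that is `-1` exactly on the simple reflections odd-connected to `b`
  let f : B → ℤˣ := fun a => if a ∈ O then -1 else 1
  have hf : M.IsLiftable f := by
    intro a a'
    by_cases hiff : a ∈ O ↔ a' ∈ O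
    · rw [show f a' = f a by simp [f, hiff], Int.units_mul_self, one_pow]
    · have hodd : ¬Odd (M a a') := fun hodd =>
        hiff ⟨fun ha => ha.tail hodd, fun ha => ha.tail (M.symmetric a a' ▸ hodd)⟩
      obtain ⟨k, hk⟩ := Nat.not_odd_iff_even.1 hodd
      rw [hk, ← two_mul, pow_mul, Int.units_sq, one_pow]
  have hφ := congrArg (cs.lift ⟨f, hf⟩) h
  simp only [map_mul, map_inv, mul_inv_cancel_comm, cs.lift_apply_simple hf] at hφ
  simp [f, O, hbt, Relation.ReflTransGen.refl] at hφ

end CoxeterSystem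

namespace GeomCoxeterSystem

variable {B : Type} [Fintype B] [DecidableEq B] {W : Type} [Group W] (g : GeomCoxeterSystem B W)

lemma sigma_mul_apply (w w' : W) (v : B → ℝ) : g.σ (w * w') v = g.σ w (g.σ w' v) := by
  rw [map_mul]; rfl

lemma sigma_inv_sigma (w : W) (v : B → ℝ) : g.σ w⁻¹ (g.σ w v) = v := by
  rw [← sigma_mul_apply, inv_mul_cancel, map_one]; rfl

lemma sigma_simple_sigma_simple (i : B) (v : B → ℝ) :
    g.σ (g.cs.simple i) (g.σ (g.cs.simple i) v) = v := by
  rw [← sigma_mul_apply, g.cs.simple_mul_simple_self, map_one]; rfl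

lemma sigma_simple_alr_self (i : B) : g.σ (g.cs.simple i) (alr i) = -alr i := by
  rw [g.σ_simple, mul_div_assoc, div_self (g.bil_diag_pos i).ne', mul_one]
  module

lemma bil_sigma (w : W) (u v : B → ℝ) : g.bil (g.σ w u) (g.σ w v) = g.bil u v := by
  induction w using g.cs.simple_induction generalizing u v with
  | simple i =>
    have := (g.bil_diag_pos i).ne'
    simp only [g.σ_simple, map_sub, map_smul, LinearMap.sub_apply, LinearMap.smul_apply,
      smul_eq_mul, g.bil_symm u (alr i)]
    field_simp
    ring
  | one => simp
  | mul w w' hw hw' => rw [sigma_mul_apply, sigma_mul_apply, hw, hw']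

lemma alr_mem_roots (i : B) : alr i ∈ g.roots := ⟨(1, i), by simp⟩

lemma sigma_mem_roots {γ : B → ℝ} (hγ : γ ∈ g.roots) (w : W) : g.σ w γ ∈ g.roots := by
  obtain ⟨⟨u, i⟩, rfl⟩ := hγ
  exact ⟨(w * u, i), g.sigma_mul_apply w u (alr i)⟩

lemma bil_self_pos {γ : B → ℝ} (hγ : γ ∈ g.roots) : 0 < g.bil γ γ := by
  obtain ⟨⟨u, i⟩, rfl⟩ := hγ
  simpa only [bil_sigma] using g.bil_diag_pos i

lemma ne_zero_of_mem_roots {γ : B → ℝ} (hγ : γ ∈ g.roots) : γ ≠ 0 := by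
  rintro rfl
  simpa using g.bil_self_pos hγ

lemma sigma_refl_apply {γ : B → ℝ} (hγ : γ ∈ g.roots) (v : B → ℝ) :
    g.σ (g.refl γ) v = v - (2 * g.bil γ v / g.bil γ γ) • γ := by
  obtain ⟨⟨u, i⟩, rfl⟩ := hγ
  obtain ⟨v, rfl⟩ := (g.σ u).surjective v
  dsimp only
  rw [g.refl_spec, sigma_mul_apply, sigma_mul_apply, sigma_inv_sigma, g.σ_simple, map_sub,
    map_smul, bil_sigma, bil_sigma]

lemma sigma_refl_self {γ : B → ℝ} (hγ : γ ∈ g.roots) : g.σ (g.refl γ) γ = -γ := by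
  rw [g.sigma_refl_apply hγ, mul_div_assoc, div_self (g.bil_self_pos hγ).ne', mul_one]
  module

lemma alr_mem_posRoots (i : B) : alr i ∈ g.posRoots :=
  ⟨g.alr_mem_roots i, fun s => by rw [alr, Pi.single_apply]; split <;> norm_num⟩

lemma neg_alr_notMem_posRoots (i : B) : -alr i ∉ g.posRoots :=
  fun h => absurd (h.2 i) (by simp)

lemma neg_notMem_posRoots {γ : B → ℝ} (hγ : γ ∈ g.posRoots) : -γ ∉ g.posRoots := fun h =>
  g.ne_zero_of_mem_roots hγ.1 <| funext fun s => le_antisymm (by simpa using h.2 s) (hγ.2 s)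

/-! ### Rank-two subgroups -/

lemma sigma_simple_of_bil_eq_zero {i : B} {v : B → ℝ} (h : g.bil (alr i) v = 0) :
    g.σ (g.cs.simple i) v = v := by
  simp [g.σ_simple, h]

lemma M_ne_zero {i j : B} (hij : i ≠ j) : g.M i j ≠ 0 := by
  intro hM
  have hi := g.bil_diag_pos i
  have hj := g.bil_diag_pos j
  set ri := √(g.bil (alr i) (alr i))
  set rj := √(g.bil (alr j) (alr j))
  have hri : 0 < ri := Real.sqrt_pos.2 hi
  have hrj : 0 < rj := Real.sqrt_pos.2 hj
  have hκ : g.bil (alr i) (alr j) = -(ri * rj) := by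
    rw [g.bil_offdiag i j hij, hM, Real.sqrt_mul hi.le]; simp [ri, rj]
  have hci : g.bil (alr i) (alr i) = ri * ri := (Real.mul_self_sqrt hi.le).symm
  have hcj : g.bil (alr j) (alr j) = rj * rj := (Real.mul_self_sqrt hj.le).symm
  -- with `m(i, j) = ∞` the form is degenerate on the span of `α_i, α_j`, and
  -- `s_i s_j` acts there as a nontrivial transvection along its radical vector `v`
  set v := rj • alr i + ri • alr j
  have hfix_i : g.σ (g.cs.simple i) v = v := g.sigma_simple_of_bil_eq_zero <| by
    simp only [v, map_add, map_smul, smul_eq_mul, hκ, hci]; ring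
  have hfix_j : g.σ (g.cs.simple j) v = v := g.sigma_simple_of_bil_eq_zero <| by
    simp only [v, map_add, map_smul, smul_eq_mul, g.bil_symm (alr j) (alr i), hκ, hcj]; ring
  have hstep : g.σ (g.cs.simple i * g.cs.simple j) (alr i) = alr i + (2 / rj) • v := by
    have hj' : g.σ (g.cs.simple j) (alr i) = -alr i + (2 / rj) • v := by
      rw [g.σ_simple, g.bil_symm, hκ, hcj]
      match_scalars <;> field_simp
      norm_num
    rw [sigma_mul_apply, hj', map_add, map_neg, map_smul, sigma_simple_alr_self,
      hfix_i, neg_neg]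
  have hpow : ∀ n : ℕ, g.σ ((g.cs.simple i * g.cs.simple j) ^ n) (alr i)
      = alr i + (n * (2 / rj)) • v := by
    intro n
    induction n with
    | zero => simp
    | succ n ih =>
      rw [pow_succ', sigma_mul_apply, ih, map_add, map_smul, hstep, sigma_mul_apply,
        hfix_j, hfix_i]
      push_cast
      module
  have := g.finW
  have hN := (isOfFinOrder_of_finite (g.cs.simple i * g.cs.simple j)).orderOf_pos
  have h := congrFun (hpow (orderOf (g.cs.simple i * g.cs.simple j))) i
  rw [pow_orderOf_eq_one, map_one] at h
  simp only [v, LinearEquiv.coe_one, id, Pi.add_apply, Pi.smul_apply, alr_apply_self,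
    alr_apply_of_ne hij, smul_eq_mul, mul_zero, add_zero, mul_one, mul_assoc,
    div_mul_cancel₀ _ hrj.ne'] at h
  have : (0 : ℝ) < orderOf (g.cs.simple i * g.cs.simple j) := by exact_mod_cast hN
  linarith

lemma two_le_M {i j : B} (hij : i ≠ j) : 2 ≤ g.M i j := by
  have := g.M_ne_zero hij
  have := g.M.off_diagonal i j hij
  omega

lemma sin_pi_div_M_pos {i j : B} (hij : i ≠ j) : 0 < Real.sin (Real.pi / g.M i j) := by
  have : (2 : ℝ) ≤ g.M i j := by exact_mod_cast g.two_le_M hij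
  apply Real.sin_pos_of_pos_of_lt_pi (by positivity)
  rw [div_lt_iff₀ (by positivity)]
  nlinarith [Real.pi_pos]

def unitAlr (i : B) : B → ℝ := (√(g.bil (alr i) (alr i)))⁻¹ • alr i

lemma smul_unitAlr (i : B) : √(g.bil (alr i) (alr i)) • g.unitAlr i = alr i := by
  rw [unitAlr, smul_smul, mul_inv_cancel₀ (Real.sqrt_pos.2 (g.bil_diag_pos i)).ne', one_smul]

lemma bil_unitAlr_self (i : B) : g.bil (g.unitAlr i) (g.unitAlr i) = 1 := by
  have := g.bil_diag_pos i
  simp only [unitAlr, map_smul, LinearMap.smul_apply, smul_eq_mul]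
  field_simp
  rw [Real.sq_sqrt this.le]

lemma bil_unitAlr_of_ne {i j : B} (hij : i ≠ j) :
    g.bil (g.unitAlr i) (g.unitAlr j) = -Real.cos (Real.pi / g.M i j) := by
  have hi := g.bil_diag_pos i
  have hj := g.bil_diag_pos j
  simp only [unitAlr, map_smul, LinearMap.smul_apply, smul_eq_mul, g.bil_offdiag i j hij,
    Real.sqrt_mul hi.le]
  field_simp

lemma sigma_simple_eq_unitAlr (i : B) (v : B → ℝ) :
    g.σ (g.cs.simple i) v = v - (2 * g.bil (g.unitAlr i) v) • g.unitAlr i := by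
  have := g.bil_diag_pos i
  rw [g.σ_simple, ← g.smul_unitAlr i]
  simp only [map_smul, LinearMap.smul_apply, smul_eq_mul, smul_smul, bil_unitAlr_self]
  congr 2
  field_simp

lemma sigma_simple_smul_unitAlr_add {i j : B} (hij : i ≠ j) (a b : ℝ) :
    g.σ (g.cs.simple i) (a • g.unitAlr i + b • g.unitAlr j)
      = (2 * Real.cos (Real.pi / g.M i j) * b - a) • g.unitAlr i + b • g.unitAlr j := by
  rw [sigma_simple_eq_unitAlr]
  simp only [map_add, map_smul, smul_eq_mul, bil_unitAlr_self, g.bil_unitAlr_of_ne hij]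
  module

lemma sigma_alternatingWord_unitAlr {i j : B} (hij : i ≠ j) (n : ℕ) :
    g.σ (g.cs.wordProd (CoxeterSystem.alternatingWord i j n)) (g.unitAlr i)
      = (if Even n then sinRatio (Real.pi / g.M i j) (n + 1)
          else sinRatio (Real.pi / g.M i j) n) • g.unitAlr i
        + (if Even n then sinRatio (Real.pi / g.M i j) n
          else sinRatio (Real.pi / g.M i j) (n + 1)) • g.unitAlr j := by
  induction n with
  | zero => simp [CoxeterSystem.alternatingWord, sinRatio, (g.sin_pi_div_M_pos hij).ne']
  | succ n ih =>
    rw [CoxeterSystem.alternatingWord_succ', g.cs.wordProd_cons, sigma_mul_apply, ih]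
    rcases Nat.even_or_odd n with hn | hn
    · have hn' : ¬Even (n + 1) := by simpa [Nat.even_add_one] using hn
      rw [if_pos hn, if_pos hn, if_pos hn, if_neg hn', if_neg hn', add_comm,
        g.sigma_simple_smul_unitAlr_add hij.symm, g.M.symmetric, ← sinRatio_add_two, add_comm]
    · have hn₀ : ¬Even n := Nat.not_even_iff_odd.2 hn
      have hn' : Even (n + 1) := by simpa [Nat.even_add_one] using hn
      rw [if_neg hn₀, if_neg hn₀, if_neg hn₀, if_pos hn', if_pos hn',
        g.sigma_simple_smul_unitAlr_add hij, ← sinRatio_add_two]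

lemma sigma_alternatingWord_alr_mem_cone {i j : B} (hij : i ≠ j) {n : ℕ}
    (hn : n + 1 ≤ g.M i j) : ∃ a b : ℝ, 0 ≤ a ∧ 0 ≤ b ∧
      g.σ (g.cs.wordProd (CoxeterSystem.alternatingWord i j n)) (alr i)
        = a • alr i + b • alr j := by
  have hU : ∀ k ≤ n + 1, 0 ≤ sinRatio (Real.pi / g.M i j) k := fun k hk => by
    have : (k : ℝ) ≤ g.M i j := by exact_mod_cast hk.trans hn
    have : (0 : ℝ) < g.M i j := Nat.cast_pos.2 (by have := g.two_le_M hij; omega)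
    refine sinRatio_nonneg (by positivity) ?_
    calc (k : ℝ) * (Real.pi / g.M i j) ≤ g.M i j * (Real.pi / g.M i j) := by gcongr
      _ = Real.pi := by field_simp
  have hp : 0 ≤ if Even n then sinRatio (Real.pi / g.M i j) (n + 1)
      else sinRatio (Real.pi / g.M i j) n := by split <;> exact hU _ (by omega)
  have hq : 0 ≤ if Even n then sinRatio (Real.pi / g.M i j) n
      else sinRatio (Real.pi / g.M i j) (n + 1) := by split <;> exact hU _ (by omega)
  have hri : 0 < √(g.bil (alr i) (alr i)) := Real.sqrt_pos.2 (g.bil_diag_pos i)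
  have hrj : 0 < √(g.bil (alr j) (alr j)) := Real.sqrt_pos.2 (g.bil_diag_pos j)
  refine ⟨_, √(g.bil (alr i) (alr i)) / √(g.bil (alr j) (alr j)) * _, hp,
    mul_nonneg (by positivity) hq, ?_⟩
  conv_lhs => rw [← g.smul_unitAlr i, map_smul, g.sigma_alternatingWord_unitAlr hij]
  simp only [unitAlr]
  match_scalars <;> field_simp

/-! ### Positive roots and lengths -/

/-- Humphreys, *Reflection groups and Coxeter groups*, Theorem 5.4. -/
theorem sigma_alr_mem_posRoots_of_length_mul_simple {w : W} {i : B}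
    (h : g.cs.length (w * g.cs.simple i) = g.cs.length w + 1) : g.σ w (alr i) ∈ g.posRoots := by
  induction hn : g.cs.length w using Nat.strong_induction_on generalizing w i with
  | _ n ih =>
  rcases eq_or_ne w 1 with rfl | hw
  · simpa using g.alr_mem_posRoots i
  obtain ⟨t, ht⟩ := g.cs.exists_rightDescent_of_ne_one hw
  have ht := g.cs.isRightDescent_iff.1 ht
  have hit : i ≠ t := by rintro rfl; omega
  obtain ⟨u, ω, hω, rfl, hl, hui, hut⟩ := g.cs.exists_dihedral_decomposition w i t
  have hu : g.cs.length u < n := by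
    have : ω ≠ [] := by rintro rfl; simp only [CoxeterSystem.wordProd_nil, mul_one] at ht; omega
    have := List.length_pos_of_ne_nil this
    omega
  have hred : g.cs.IsReduced (ω ++ [i]) := by
    have h₁ : g.cs.length (g.cs.wordProd (ω ++ [i])) ≤ ω.length + 1 := by
      simpa using g.cs.length_wordProd_le (ω ++ [i])
    have h₂ : g.cs.length (u * g.cs.wordProd ω * g.cs.simple i)
        ≤ g.cs.length u + g.cs.length (g.cs.wordProd (ω ++ [i])) := by
      rw [CoxeterSystem.wordProd_append, CoxeterSystem.wordProd_singleton, mul_assoc]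
      exact g.cs.length_mul_le _ _
    rw [CoxeterSystem.IsReduced, List.length_append, List.length_singleton]
    omega
  obtain ⟨hω', hM⟩ := hred.eq_alternatingWord hω (g.M_ne_zero hit)
  obtain ⟨a, b, ha, hb, hab⟩ := g.sigma_alternatingWord_alr_mem_cone hit hM
  have hpi := ih _ hu hui rfl
  have hpt := ih _ hu hut rfl
  refine ⟨g.sigma_mem_roots (g.alr_mem_roots i) _, fun s => ?_⟩
  rw [sigma_mul_apply, hω', hab, map_add, map_smul, map_smul]
  simp only [Pi.add_apply, Pi.smul_apply, smul_eq_mul]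
  have := hpi.2 s
  have := hpt.2 s
  positivity

lemma neg_sigma_alr_mem_posRoots_of_length_mul_simple {w : W} {i : B}
    (h : g.cs.length (w * g.cs.simple i) + 1 = g.cs.length w) :
    -g.σ w (alr i) ∈ g.posRoots := by
  have := g.sigma_alr_mem_posRoots_of_length_mul_simple (w := w * g.cs.simple i) (i := i)
    (by rw [g.cs.simple_mul_simple_cancel_right]; omega)
  rwa [sigma_mul_apply, sigma_simple_alr_self, map_neg] at this

lemma length_mul_simple_eq_iff (w : W) (i : B) :
    g.cs.length (w * g.cs.simple i) = g.cs.length w + 1 ↔ g.σ w (alr i) ∈ g.posRoots := by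
  refine ⟨g.sigma_alr_mem_posRoots_of_length_mul_simple, fun hpos => ?_⟩
  refine (g.cs.length_mul_simple w i).resolve_right fun h => ?_
  exact g.neg_notMem_posRoots hpos (g.neg_sigma_alr_mem_posRoots_of_length_mul_simple h)

lemma mem_posRoots_or_neg_mem_posRoots {γ : B → ℝ} (hγ : γ ∈ g.roots) :
    γ ∈ g.posRoots ∨ -γ ∈ g.posRoots := by
  obtain ⟨⟨w, i⟩, rfl⟩ := hγ
  exact (g.cs.length_mul_simple w i).imp g.sigma_alr_mem_posRoots_of_length_mul_simple
    g.neg_sigma_alr_mem_posRoots_of_length_mul_simple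

lemma sigma_injective : Function.Injective g.σ := by
  refine (injective_iff_map_eq_one g.σ).2 fun w hw => ?_
  by_contra hne
  obtain ⟨t, ht⟩ := g.cs.exists_rightDescent_of_ne_one hne
  have := g.neg_sigma_alr_mem_posRoots_of_length_mul_simple (g.cs.isRightDescent_iff.1 ht)
  rw [hw] at this
  exact g.neg_alr_notMem_posRoots t this

/-! ### Crystallographic systems -/

lemma bil_alr_self_eq_of_odd (hcr : g.IsCrystallographic) {a a' : B} (hodd : Odd (g.M a a')) :
    g.bil (alr a) (alr a) = g.bil (alr a') (alr a') := by
  rcases eq_or_ne a a' with rfl | haa'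
  · rfl
  have hm3 : 3 ≤ g.M a a' := by have := g.two_le_M haa'; obtain ⟨j, hj⟩ := hodd; omega
  set θ := Real.pi / g.M a a'
  have hθ : 0 < θ := by positivity
  have hθ3 : θ ≤ Real.pi / 3 :=
    div_le_div_of_nonneg_left Real.pi_pos.le (by norm_num) (by exact_mod_cast hm3)
  have hcos : 0 < Real.cos θ := Real.cos_pos_of_mem_Ioo ⟨by linarith, by linarith [Real.pi_pos]⟩
  have ha := g.bil_diag_pos a
  have ha' := g.bil_diag_pos a'
  have hs : 0 < √(g.bil (alr a) (alr a) * g.bil (alr a') (alr a')) := by positivity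
  have hκ := g.bil_offdiag a a' haa'
  obtain ⟨k, hk⟩ := hcr _ (g.alr_mem_roots a) _ (g.alr_mem_roots a')
  obtain ⟨k', hk'⟩ := hcr _ (g.alr_mem_roots a') _ (g.alr_mem_roots a)
  rw [g.bil_symm, hκ, div_eq_iff ha'.ne'] at hk'
  rw [hκ, div_eq_iff ha.ne'] at hk
  -- `k k' = 4 cos² θ`, which is an integer only for `m(a, a') = 3`, where `k = k' = -1`
  have hkk' : ((k * k' : ℤ) : ℝ) = 4 * Real.cos θ ^ 2 := by
    have := Real.mul_self_sqrt (mul_pos ha ha').le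
    apply mul_right_cancel₀ (mul_pos ha ha').ne'
    push_cast
    linear_combination (-(k' * g.bil (alr a') (alr a'))) * hk
      + 2 * Real.cos θ * √(g.bil (alr a) (alr a) * g.bil (alr a') (alr a')) * hk'
      + 4 * Real.cos θ ^ 2 * this
  have hm := Real.eq_three_of_odd_of_intCast_eq_four_mul_cos_sq hodd hm3 hkk'
  have hk0 : (k : ℝ) < 0 := by nlinarith
  rw [show θ = Real.pi / 3 by simp [θ, hm], Real.cos_pi_div_three] at hkk'
  have : k * k' = 1 := by exact_mod_cast (show ((k * k' : ℤ) : ℝ) = 1 by rw [hkk']; norm_num)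
  rcases Int.mul_eq_one_iff_eq_one_or_neg_one.1 this with ⟨rfl, -⟩ | ⟨rfl, rfl⟩
  · norm_num at hk0
  · push_cast at hk hk'
    linarith

lemma bil_alr_self_eq_of_reflTransGen (hcr : g.IsCrystallographic) {b t : B}
    (h : Relation.ReflTransGen (fun x y => Odd (g.M x y)) b t) :
    g.bil (alr b) (alr b) = g.bil (alr t) (alr t) := by
  induction h with
  | refl => rfl
  | tail _ hodd ih => exact ih.trans (g.bil_alr_self_eq_of_odd hcr hodd)

lemma eq_alr_or_eq_neg_alr_of_mem_roots (hcr : g.IsCrystallographic) {γ : B → ℝ}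
    (hγ : γ ∈ g.roots) {b : B} {c : ℝ} (hc : γ = c • alr b) : γ = alr b ∨ γ = -alr b := by
  obtain ⟨⟨u, t⟩, hut⟩ := hγ
  dsimp only at hut
  have hb := g.bil_diag_pos b
  have hc0 : c ≠ 0 := by rintro rfl; exact g.ne_zero_of_mem_roots ⟨(u, t), hut⟩ (by simp [hc])
  -- `s_γ = s_b`, both being reflections in the line `ℝ α_b`, so `s_t` and `s_b` are conjugate
  have hconj : u * g.cs.simple t * u⁻¹ = g.cs.simple b := by
    rw [← g.refl_spec, hut]
    apply g.sigma_injective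
    ext1 v
    rw [g.sigma_refl_apply ⟨(u, t), hut⟩, g.σ_simple, hc]
    simp only [map_smul, LinearMap.smul_apply, smul_eq_mul, smul_smul]
    congr 2
    field_simp
  have hlen := g.bil_alr_self_eq_of_reflTransGen hcr (g.cs.reflTransGen_odd_of_conj hconj)
  have hcc : c * c = 1 := by
    have := g.bil_sigma u (alr t) (alr t)
    rw [hut, hc, ← hlen] at this
    simp only [map_smul, LinearMap.smul_apply, smul_eq_mul] at this
    nlinarith
  rcases mul_self_eq_one_iff.1 hcc with rfl | rfl
  · exact .inl (by simpa using hc)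
  · exact .inr (by simpa using hc)

lemma sigma_simple_mem_posRoots (hcr : g.IsCrystallographic) {i : B} {γ : B → ℝ}
    (hγ : γ ∈ g.posRoots) (hne : γ ≠ alr i) : g.σ (g.cs.simple i) γ ∈ g.posRoots := by
  -- `γ` is not a multiple of `α_i`, so it has a positive coordinate which `s_i` does not change
  obtain ⟨s, hsi, hs⟩ : ∃ s, s ≠ i ∧ 0 < γ s := by
    by_contra! h
    have hγi : γ = γ i • alr i := funext fun s => by
      rcases eq_or_ne s i with rfl | hsi
      · simp
      · simp [alr_apply_of_ne hsi, le_antisymm (h s hsi) (hγ.2 s)]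
    rcases g.eq_alr_or_eq_neg_alr_of_mem_roots hcr hγ.1 hγi with h | h
    · exact hne h
    · exact g.neg_alr_notMem_posRoots i (h ▸ hγ)
  refine (g.mem_posRoots_or_neg_mem_posRoots (g.sigma_mem_roots hγ.1 _)).resolve_right
    fun hneg => ?_
  have := hneg.2 s
  simp only [g.σ_simple, Pi.neg_apply, Pi.sub_apply, Pi.smul_apply, alr_apply_of_ne hsi,
    smul_eq_mul, mul_zero, sub_zero, Left.nonneg_neg_iff] at this
  linarith

lemma sigma_simple_ne_alr {i : B} {γ : B → ℝ} (hγ : γ ∈ g.posRoots) :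
    g.σ (g.cs.simple i) γ ≠ alr i := fun h => by
  apply g.neg_alr_notMem_posRoots i
  rwa [← g.sigma_simple_alr_self, ← h, sigma_simple_sigma_simple]

def invSet (w : W) : Set (B → ℝ) := {γ | γ ∈ g.posRoots ∧ g.σ w γ ∉ g.posRoots}

lemma invSet_mul_simple (hcr : g.IsCrystallographic) {w : W} {t : B}
    (h : g.cs.length (w * g.cs.simple t) = g.cs.length w + 1) :
    g.invSet (w * g.cs.simple t) = insert (alr t) (g.σ (g.cs.simple t) '' g.invSet w) := by
  have hpos := g.sigma_alr_mem_posRoots_of_length_mul_simple h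
  ext γ
  rcases eq_or_ne γ (alr t) with rfl | hγ
  · simp only [invSet, Set.mem_ofPred_eq, Set.mem_insert_iff, true_or, iff_true]
    refine ⟨g.alr_mem_posRoots t, ?_⟩
    rw [sigma_mul_apply, sigma_simple_alr_self, map_neg]
    exact g.neg_notMem_posRoots hpos
  have himage : γ ∈ g.σ (g.cs.simple t) '' g.invSet w ↔ g.σ (g.cs.simple t) γ ∈ g.invSet w :=
    ⟨by rintro ⟨δ, hδ, rfl⟩; rwa [sigma_simple_sigma_simple],
      fun h => ⟨_, h, g.sigma_simple_sigma_simple t γ⟩⟩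
  rw [Set.mem_insert_iff, or_iff_right hγ, himage]
  simp only [invSet, Set.mem_ofPred_eq, sigma_mul_apply]
  refine and_congr_left fun hw => ⟨fun hγ' => g.sigma_simple_mem_posRoots hcr hγ' hγ,
    fun hγ' => ?_⟩
  have hne : g.σ (g.cs.simple t) γ ≠ alr t := fun h => hw (h ▸ hpos)
  simpa only [sigma_simple_sigma_simple] using g.sigma_simple_mem_posRoots hcr hγ' hne

lemma posRoots_finite : g.posRoots.Finite :=
  have := g.finW
  (Set.finite_range _).subset fun _ h => h.1

lemma image_sigma_simple_posRoots_diff (hcr : g.IsCrystallographic) (b : B) :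
    g.σ (g.cs.simple b) '' (g.posRoots \ {alr b}) = g.posRoots \ {alr b} := by
  have hmaps : Set.MapsTo (g.σ (g.cs.simple b)) (g.posRoots \ {alr b}) (g.posRoots \ {alr b}) :=
    fun γ ⟨hγ, hne⟩ => ⟨g.sigma_simple_mem_posRoots hcr hγ hne, g.sigma_simple_ne_alr hγ⟩
  refine hmaps.image_subset.antisymm fun γ hγ => ⟨_, hmaps hγ, ?_⟩
  exact g.sigma_simple_sigma_simple b γ

lemma sigma_simple_rho (hcr : g.IsCrystallographic) (b : B) :
    g.σ (g.cs.simple b) g.rho = g.rho - alr b := by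
  have hfin := g.posRoots_finite.sdiff (t := {alr b})
  have hσS := g.image_sigma_simple_posRoots_diff hcr b
  set S := g.posRoots \ {alr b}
  have hb : alr b ∉ S := fun h => h.2 rfl
  have hsplit : g.posRoots = insert (alr b) S := by
    rw [Set.insert_sdiff_singleton, Set.insert_eq_of_mem (g.alr_mem_posRoots b)]
  have hsum : ∑ᶠ γ ∈ g.posRoots, γ = alr b + ∑ᶠ γ ∈ S, γ := by
    rw [hsplit, finsum_mem_insert _ hb hfin]
  have hσsum : ∑ᶠ γ ∈ g.posRoots, g.σ (g.cs.simple b) γ = -alr b + ∑ᶠ γ ∈ S, γ := by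
    rw [hsplit, finsum_mem_insert _ hb hfin, sigma_simple_alr_self]
    conv_rhs => rw [← hσS, finsum_mem_image (g.σ (g.cs.simple b)).injective.injOn]
  have hmap : g.σ (g.cs.simple b) (∑ᶠ γ ∈ g.posRoots, γ)
      = ∑ᶠ γ ∈ g.posRoots, g.σ (g.cs.simple b) γ :=
    (g.σ (g.cs.simple b)).toLinearMap.toAddMonoidHom.map_finsum_mem _ g.posRoots_finite
  rw [rho, map_smul, hmap, hσsum, hsum]
  module

lemma two_mul_bil_rho_alr (hcr : g.IsCrystallographic) (b : B) :
    2 * g.bil g.rho (alr b) = g.bil (alr b) (alr b) := by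
  have h := g.sigma_simple_rho hcr b
  rw [g.σ_simple, sub_right_inj] at h
  have := congrFun h b
  simp only [Pi.smul_apply, alr_apply_self, smul_eq_mul, mul_one] at this
  field_simp [(g.bil_diag_pos b).ne'] at this
  rw [g.bil_symm, this]

end GeomCoxeterSystem

/-! ### Parabolic subsystems -/

/-- A parabolic subsystem of `g`: the simple reflections of `W'` are those of `W` indexed by
`ι`, and `ext` identifies the geometric representation of `W'` with the span of the `α_{ι s}`. -/
structure ParabolicEmbedding {B B' : Type} [Fintype B] [DecidableEq B] [Fintype B']
    [DecidableEq B'] {W W' : Type} [Group W] [Group W'] (g : GeomCoxeterSystem B W)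
    (g' : GeomCoxeterSystem B' W') where
  ι : B' → B
  ι_injective : Function.Injective ι
  f : W' →* W
  f_simple : ∀ s : B', f (g'.cs.simple s) = g.cs.simple (ι s)
  ext : (B' → ℝ) →ₗ[ℝ] (B → ℝ)
  ext_apply : ∀ v : B' → ℝ, ext v = ∑ b' : B', v b' • alr (ι b')
  bil_ext : ∀ u v : B' → ℝ, g.bil (ext u) (ext v) = g'.bil u v
  ext_sigma : ∀ (w : W') (v : B' → ℝ), ext (g'.σ w v) = g.σ (f w) (ext v)

namespace ParabolicEmbedding

variable {B B' : Type} [Fintype B] [DecidableEq B] [Fintype B'] [DecidableEq B']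
  {W W' : Type} [Group W] [Group W'] {g : GeomCoxeterSystem B W}
  {g' : GeomCoxeterSystem B' W'} (P : ParabolicEmbedding g g')

lemma ext_alr (b' : B') : P.ext (alr b') = alr (P.ι b') := by
  simp [P.ext_apply, alr, Pi.single_apply, ite_smul]

lemma ext_apply_ι (v : B' → ℝ) (b' : B') : P.ext v (P.ι b') = v b' := by
  simp [P.ext_apply, Finset.sum_apply, alr, Pi.single_apply, P.ι_injective.eq_iff]

lemma ext_apply_of_notMem_range (v : B' → ℝ) {b : B} (hb : b ∉ Set.range P.ι) :
    P.ext v b = 0 := by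
  simp only [P.ext_apply, Finset.sum_apply, Pi.smul_apply, smul_eq_mul]
  exact Finset.sum_eq_zero fun b' _ => by
    rw [alr_apply_of_ne fun h => hb ⟨b', h.symm⟩, mul_zero]

lemma ext_mem_roots {γ' : B' → ℝ} (hγ' : γ' ∈ g'.roots) : P.ext γ' ∈ g.roots := by
  obtain ⟨⟨w, t⟩, rfl⟩ := hγ'
  dsimp only
  rw [P.ext_sigma, P.ext_alr]
  exact g.sigma_mem_roots (g.alr_mem_roots _) _

lemma ext_mem_posRoots_iff {γ' : B' → ℝ} (hγ' : γ' ∈ g'.roots) :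
    P.ext γ' ∈ g.posRoots ↔ γ' ∈ g'.posRoots := by
  refine ⟨fun h => ⟨hγ', fun b' => P.ext_apply_ι γ' b' ▸ h.2 (P.ι b')⟩,
    fun h => ⟨P.ext_mem_roots hγ', fun b => ?_⟩⟩
  by_cases hb : b ∈ Set.range P.ι
  · obtain ⟨b', rfl⟩ := hb
    exact P.ext_apply_ι γ' b' ▸ h.2 b'
  · exact (P.ext_apply_of_notMem_range γ' hb).ge

lemma f_refl {γ' : B' → ℝ} (hγ' : γ' ∈ g'.roots) : P.f (g'.refl γ') = g.refl (P.ext γ') := by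
  obtain ⟨⟨w, t⟩, rfl⟩ := hγ'
  dsimp only
  rw [g'.refl_spec, P.ext_sigma, P.ext_alr, g.refl_spec, map_mul, map_mul, map_inv, P.f_simple]

lemma isCrystallographic (P : ParabolicEmbedding g g') (hcr : g.IsCrystallographic) :
    g'.IsCrystallographic := by
  intro γ' hγ' δ' hδ'
  simpa only [P.bil_ext] using hcr _ (P.ext_mem_roots hγ') _ (P.ext_mem_roots hδ')

lemma length_mul_simple_f_iff (w : W') (t : B') :
    g.cs.length (P.f w * g.cs.simple (P.ι t)) = g.cs.length (P.f w) + 1 ↔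
      g'.cs.length (w * g'.cs.simple t) = g'.cs.length w + 1 := by
  rw [g.length_mul_simple_eq_iff, g'.length_mul_simple_eq_iff, ← P.ext_alr, ← P.ext_sigma,
    P.ext_mem_posRoots_iff (g'.sigma_mem_roots (g'.alr_mem_roots t) w)]

lemma length_f (w : W') : g.cs.length (P.f w) = g'.cs.length w := by
  induction w using g'.cs.induction_on_right_ascent with
  | one => simp
  | mul_simple w t h ih => rw [map_mul, P.f_simple, (P.length_mul_simple_f_iff w t).2 h, ih, h]

lemma invSet_f (hcr : g.IsCrystallographic) (w : W') :
    g.invSet (P.f w) = P.ext '' g'.invSet w := by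
  induction w using g'.cs.induction_on_right_ascent with
  | one => simp [GeomCoxeterSystem.invSet]
  | mul_simple w t h ih =>
    rw [map_mul, P.f_simple, g.invSet_mul_simple hcr ((P.length_mul_simple_f_iff w t).2 h), ih,
      g'.invSet_mul_simple (P.isCrystallographic hcr) h, Set.image_insert_eq, Set.image_image,
      Set.image_image, P.ext_alr]
    simp only [P.ext_sigma, P.f_simple]

lemma bil_rho_ext (hcr : g.IsCrystallographic) (γ' : B' → ℝ) :
    g.bil g.rho (P.ext γ') = g'.bil g'.rho γ' := by
  suffices g.bil g.rho ∘ₗ P.ext = g'.bil g'.rho from LinearMap.congr_fun this γ'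
  refine (Pi.basisFun ℝ B').ext fun b => ?_
  have h := g.two_mul_bil_rho_alr hcr (P.ι b)
  have h' := g'.two_mul_bil_rho_alr (P.isCrystallographic hcr) b
  rw [← P.ext_alr, P.bil_ext] at h
  rw [Pi.basisFun_apply, LinearMap.comp_apply]
  change g.bil g.rho (P.ext (alr b)) = g'.bil g'.rho (alr b)
  linarith

lemma pairRho_ext (hcr : g.IsCrystallographic) (γ' : B' → ℝ) :
    g.pairRho (P.ext γ') = g'.pairRho γ' := by
  simp only [GeomCoxeterSystem.pairRho, P.bil_rho_ext hcr, P.bil_ext]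

lemma coverArrow_f {v w : W'} (h : g'.coverArrow v w) : g.coverArrow (P.f v) (P.f w) := by
  obtain ⟨γ', hγ', rfl, hl⟩ := h
  exact ⟨P.ext γ', (P.ext_mem_posRoots_iff hγ'.1).2 hγ', by rw [map_mul, P.f_refl hγ'.1],
    by rw [P.length_f, P.length_f, hl]⟩

lemma qArrow_f (hcr : g.IsCrystallographic) {γ' : B' → ℝ} {v w : W'} (h : g'.qArrow γ' v w) :
    g.qArrow (P.ext γ') (P.f v) (P.f w) := by
  obtain ⟨hγ', rfl, hl⟩ := h
  exact ⟨(P.ext_mem_posRoots_iff hγ'.1).2 hγ', by rw [map_mul, P.f_refl hγ'.1],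
    by rw [P.length_f, P.length_f, P.pairRho_ext hcr, hl]⟩

lemma exists_qArrow_of_qArrow_f (hcr : g.IsCrystallographic) (hf : Function.Injective P.f)
    {γ : B → ℝ} {v w : W'} (h : g.qArrow γ (P.f v) (P.f w)) :
    ∃ γ' : B' → ℝ, γ = P.ext γ' ∧ g'.qArrow γ' v w := by
  obtain ⟨hγ, hw, hl⟩ := h
  have hr : g.refl γ = P.f (v⁻¹ * w) := by rw [map_mul, map_inv, hw]; group
  have hinv : γ ∈ g.invSet (P.f (v⁻¹ * w)) :=
    ⟨hγ, by rw [← hr, g.sigma_refl_self hγ.1]; exact g.neg_notMem_posRoots hγ⟩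
  obtain ⟨γ', ⟨hγ', -⟩, rfl⟩ := P.invSet_f hcr _ ▸ hinv
  refine ⟨γ', rfl, hγ', hf ?_, ?_⟩
  · rw [map_mul, P.f_refl hγ'.1, hw]
  · rwa [← P.length_f, ← P.length_f, ← P.pairRho_ext hcr]

end ParabolicEmbedding

theorem parabolic_extended_bruhat_graph_general
    {B B' : Type} [Fintype B] [DecidableEq B] [Fintype B'] [DecidableEq B']
    {W W' : Type} [Group W] [Group W']
    (g : GeomCoxeterSystem B W) (g' : GeomCoxeterSystem B' W')
    (hcr : g.IsCrystallographic)
    (ι : B' → B) (hι : Function.Injective ι)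
    (f : W' →* W) (hf : Function.Injective f)
    (hsimple : ∀ s : B', f (g'.cs.simple s) = g.cs.simple (ι s))
    (ext : (B' → ℝ) →ₗ[ℝ] (B → ℝ))
    (hext : ∀ v : B' → ℝ, ext v = ∑ b' : B', v b' • alr (ι b'))
    (hbil : ∀ u v : B' → ℝ, g.bil (ext u) (ext v) = g'.bil u v)
    (hσ : ∀ (w : W') (v : B' → ℝ), ext (g'.σ w v) = g.σ (f w) (ext v)) :
    (∀ v w : W',
      (g'.coverArrow v w → g.coverArrow (f v) (f w)) ∧
      (∀ γ' : B' → ℝ, g'.qArrow γ' v w → g.qArrow (ext γ') (f v) (f w))) ∧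
    (∀ (v w : W') (γ : B → ℝ), g.qArrow γ (f v) (f w) →
      ∃ γ' : B' → ℝ, γ = ext γ' ∧ g'.qArrow γ' v w) := by
  let P : ParabolicEmbedding g g' := ⟨ι, hι, f, hsimple, ext, hext, hbil, hσ⟩
  exact ⟨fun v w => ⟨P.coverArrow_f, fun γ' => P.qArrow_f hcr⟩,
    fun v w γ => P.exists_qArrow_of_qArrow_f hcr hf⟩

/-- For a parabolic subsystem `(W',S')` of a finite
crystallographic Coxeter system `(W,S)`, the extended Bruhat graph `Γ(W',S')` is a
subgraph of `Γ(W,S)` (both ordinary and quantum arrows are preserved); moreover any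
quantum arrow of `Γ(W,S)` between elements of `W'` is labelled by a root of `Δ'` and
already belongs to `Γ(W',S')`. -/
theorem parabolic_extended_bruhat_graph
    {B B' : Type} [Fintype B] [DecidableEq B] [Fintype B'] [DecidableEq B']
    {W W' : Type} [Group W] [Group W']
    (g : GeomCoxeterSystem B W) (g' : GeomCoxeterSystem B' W')
    (hcr : g.IsCrystallographic)
    (ι : B' → B) (hι : Function.Injective ι)
    (hM : ∀ s t : B', g'.M s t = g.M (ι s) (ι t))
    (f : W' →* W) (hf : Function.Injective f)
    (hsimple : ∀ s : B', f (g'.cs.simple s) = g.cs.simple (ι s))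
    (ext : (B' → ℝ) →ₗ[ℝ] (B → ℝ))
    (hext : ∀ v : B' → ℝ, ext v = ∑ b' : B', v b' • alr (ι b'))
    (hbil : ∀ u v : B' → ℝ, g.bil (ext u) (ext v) = g'.bil u v)
    (hσ : ∀ (w : W') (v : B' → ℝ), ext (g'.σ w v) = g.σ (f w) (ext v)) :
    (∀ v w : W',
      (g'.coverArrow v w → g.coverArrow (f v) (f w)) ∧
      (∀ γ' : B' → ℝ, g'.qArrow γ' v w → g.qArrow (ext γ') (f v) (f w))) ∧
    (∀ (v w : W') (γ : B → ℝ), g.qArrow γ (f v) (f w) →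
      ∃ γ' : B' → ℝ, γ = ext γ' ∧ g'.qArrow γ' v w) :=
  parabolic_extended_bruhat_graph_general g g' hcr ι hι f hf hsimple ext hext hbil hσ
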